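/- arXiv:2212.13505 — 4 statements merged into one kernel-verified Lean document; each statement's English description precedes it below -/
import Mathlib

section
/- Brezis–Lieb lemma in weighted variable exponent spaces: let r : ℝ^N → ℝ be continuous with 1 < r⁻ ≤ r⁺ < ∞, m : ℝ^N → (0,∞) measurable, and (f_n) a bounded sequence in L^{r(·)}(m, ℝ^N) with f_n(x) → f(x) a.e. Then f ∈ L^{r(·)}(m, ℝ^N) and lim_{n→∞} ∫_{ℝ^N} | m|f_n|^{r(x)} − m|f_n − f|^{r(x)} − m|f|^{r(x)} | dx = 0. -/
open MeasureTheory Filter Topology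

/-- Convexity step: weighted bound for `(s+t)^p`. -/
lemma bl_convex {δ : ℝ} (hδ : 0 < δ) {p : ℝ} (hp1 : 1 ≤ p)
    {s t : ℝ} (hs : 0 ≤ s) (ht : 0 ≤ t) :
    (s + t) ^ p ≤ (1 + δ) ^ (p - 1) * s ^ p + ((1 + δ) / δ) ^ (p - 1) * t ^ p := by
  have h1δ : (0:ℝ) < 1 + δ := by linarith
  have hw1 : (0:ℝ) ≤ 1 / (1 + δ) := by positivity
  have hw2 : (0:ℝ) ≤ δ / (1 + δ) := by positivity
  have hwsum : 1 / (1 + δ) + δ / (1 + δ) = 1 := by field_simp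
  have hmem1 : ((1 + δ) * s) ∈ Set.Ici (0:ℝ) := Set.mem_Ici.2 (by positivity)
  have hmem2 : (((1 + δ) / δ) * t) ∈ Set.Ici (0:ℝ) := Set.mem_Ici.2 (by positivity)
  have hcx := (convexOn_rpow hp1).2 hmem1 hmem2 hw1 hw2 hwsum
  simp only [smul_eq_mul] at hcx
  have harg : 1 / (1 + δ) * ((1 + δ) * s) + δ / (1 + δ) * ((1 + δ) / δ * t) = s + t := by
    field_simp
  rw [harg] at hcx
  refine hcx.trans (le_of_eq ?_)
  have e1 : ((1 + δ) * s) ^ p = (1 + δ) ^ p * s ^ p := Real.mul_rpow h1δ.le hs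
  have e2 : (((1 + δ) / δ) * t) ^ p = ((1 + δ) / δ) ^ p * t ^ p :=
    Real.mul_rpow (by positivity) ht
  have e3 : (1 + δ) ^ (p - 1) = (1 + δ) ^ p / (1 + δ) := Real.rpow_sub_one h1δ.ne' p
  have e4 : ((1 + δ) / δ) ^ (p - 1) = ((1 + δ) / δ) ^ p / ((1 + δ) / δ) :=
    Real.rpow_sub_one (by positivity) p
  simp only [smul_eq_mul, e1, e2, e3, e4]
  field_simp

/-- Key ε-inequality, uniform in `p ∈ [1, rM]`. -/
lemma bl_key (rM : ℝ) {ε : ℝ} (hε : 0 < ε) :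
    ∃ C : ℝ, 0 ≤ C ∧ ∀ p, 1 ≤ p → p ≤ rM → ∀ a b : ℝ,
      |(|a + b| ^ p - |a| ^ p)| ≤ ε * |a| ^ p + C * |b| ^ p := by
  set ε₀ : ℝ := min (ε / 2) 1 with hε₀def
  have hε₀pos : 0 < ε₀ := lt_min (by linarith) one_pos
  have hε₀le : ε₀ ≤ 1 := min_le_right _ _
  have hε₀le' : 2 * ε₀ ≤ ε := by
    have := min_le_left (ε / 2) 1; simp only [← hε₀def] at this; linarith
  by_cases hrM : 1 ≤ rM
  · set δ : ℝ := (1 + ε₀) ^ (1 / rM) - 1 with hδdef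
    have h1ε₀ : (1:ℝ) < 1 + ε₀ := by linarith
    have hrMpos : (0:ℝ) < rM := by linarith
    have hδpos : 0 < δ := by
      have : (1:ℝ) < (1 + ε₀) ^ (1 / rM) := by
        rw [Real.one_lt_rpow_iff_of_pos (by linarith)]
        exact Or.inl ⟨h1ε₀, by positivity⟩
      simp only [hδdef]; linarith
    have h1δ : (1:ℝ) < 1 + δ := by linarith
    have hδpow : (1 + δ) ^ rM = 1 + ε₀ := by
      have h : 1 + δ = (1 + ε₀) ^ (1 / rM) := by rw [hδdef]; ring
      rw [h, ← Real.rpow_mul (by linarith), one_div, inv_mul_cancel₀ hrMpos.ne',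
        Real.rpow_one]
    set C₀ : ℝ := ((1 + δ) / δ) ^ rM with hC₀def
    have hquot1 : (1:ℝ) ≤ (1 + δ) / δ := by
      rw [le_div_iff₀ hδpos]; linarith
    have hC₀pos : 0 < C₀ := Real.rpow_pos_of_pos (by positivity) _
    -- main two-sided bounds
    have main : ∀ p, 1 ≤ p → p ≤ rM → ∀ s t : ℝ, 0 ≤ s → 0 ≤ t →
        (s + t) ^ p ≤ (1 + ε₀) * s ^ p + C₀ * t ^ p := by
      intro p hp1 hp2 s t hs ht
      refine (bl_convex hδpos hp1 hs ht).trans ?_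
      have hA : (1 + δ) ^ (p - 1) ≤ 1 + ε₀ := by
        calc (1 + δ) ^ (p - 1) ≤ (1 + δ) ^ rM :=
              Real.rpow_le_rpow_of_exponent_le h1δ.le (by linarith)
          _ = 1 + ε₀ := hδpow
      have hB : ((1 + δ) / δ) ^ (p - 1) ≤ C₀ :=
        Real.rpow_le_rpow_of_exponent_le hquot1 (by linarith)
      have hsp : (0:ℝ) ≤ s ^ p := Real.rpow_nonneg hs _
      have htp : (0:ℝ) ≤ t ^ p := Real.rpow_nonneg ht _
      nlinarith
    refine ⟨3 * C₀, by positivity, fun p hp1 hp2 a b => ?_⟩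
    have hap : (0:ℝ) ≤ |a| ^ p := Real.rpow_nonneg (abs_nonneg _) _
    have hbp : (0:ℝ) ≤ |b| ^ p := Real.rpow_nonneg (abs_nonneg _) _
    have habp : (0:ℝ) ≤ |a + b| ^ p := Real.rpow_nonneg (abs_nonneg _) _
    have hI : |a + b| ^ p ≤ (1 + ε₀) * |a| ^ p + C₀ * |b| ^ p := by
      refine le_trans ?_ (main p hp1 hp2 _ _ (abs_nonneg a) (abs_nonneg b))
      exact Real.rpow_le_rpow (abs_nonneg _) (abs_add_le a b) (by linarith)
    have hII : |a| ^ p ≤ (1 + ε₀) * |a + b| ^ p + C₀ * |b| ^ p := by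
      refine le_trans ?_ (main p hp1 hp2 _ _ (abs_nonneg (a + b)) (abs_nonneg b))
      refine Real.rpow_le_rpow (abs_nonneg _) ?_ (by linarith)
      calc |a| = |(a + b) + (-b)| := by ring_nf
        _ ≤ |a + b| + |(-b)| := abs_add_le _ _
        _ = |a + b| + |b| := by rw [abs_neg]
    have c1 : ε₀ * (1 + ε₀) ≤ ε := by nlinarith
    have c2 : ε₀ * C₀ ≤ C₀ := by nlinarith
    have h3 : ε₀ * |a + b| ^ p ≤ ε₀ * ((1 + ε₀) * |a| ^ p + C₀ * |b| ^ p) :=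
      mul_le_mul_of_nonneg_left hI hε₀pos.le
    rw [abs_sub_le_iff]
    constructor
    · nlinarith
    · nlinarith [mul_le_mul_of_nonneg_right c1 hap, mul_le_mul_of_nonneg_right c2 hbp]
  · refine ⟨0, le_refl _, fun p hp1 hp2 a b => absurd (hp1.trans hp2) hrM⟩

/-- Brezis–Lieb lemma in weighted variable exponent Lebesgue spaces. -/
theorem stmt4 {N : ℕ} (r : EuclideanSpace ℝ (Fin N) → ℝ) (hr : Continuous r)
    (rm rM : ℝ) (hrm : 1 < rm) (hbounds : ∀ x, rm ≤ r x ∧ r x ≤ rM)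
    (m : EuclideanSpace ℝ (Fin N) → ℝ) (hm : Measurable m) (hmpos : ∀ x, 0 < m x)
    (f : ℕ → EuclideanSpace ℝ (Fin N) → ℝ) (f₀ : EuclideanSpace ℝ (Fin N) → ℝ)
    (hfmeas : ∀ n, Measurable (f n)) (hf₀ : Measurable f₀)
    (hint : ∀ n, Integrable (fun x => m x * |f n x| ^ r x))
    (hbdd : ∃ C : ℝ, ∀ n, ∫ x, m x * |f n x| ^ r x ≤ C)
    (hae : ∀ᵐ x ∂(volume : Measure (EuclideanSpace ℝ (Fin N))),
      Tendsto (fun n => f n x) atTop (𝓝 (f₀ x))) :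
    Integrable (fun x => m x * |f₀ x| ^ r x) ∧
      Tendsto (fun n => ∫ x,
          |m x * |f n x| ^ r x - m x * |f n x - f₀ x| ^ r x - m x * |f₀ x| ^ r x|)
        atTop (𝓝 0) := by
  obtain ⟨C, hC⟩ := hbdd
  have hr1 : ∀ x, 1 ≤ r x := fun x => le_of_lt (lt_of_lt_of_le hrm (hbounds x).1)
  have hrpos : ∀ x, 0 < r x := fun x => lt_of_lt_of_le one_pos (hr1 x)
  have hrM : ∀ x, r x ≤ rM := fun x => (hbounds x).2
  have hrmeas : Measurable r := hr.measurable
  have hΦmeas : ∀ (g : EuclideanSpace ℝ (Fin N) → ℝ), Measurable g →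
      Measurable (fun x => m x * |g x| ^ r x) := fun g hg => hm.mul (hg.abs.pow hrmeas)
  have hΦnn : ∀ (g : EuclideanSpace ℝ (Fin N) → ℝ) (x), 0 ≤ m x * |g x| ^ r x :=
    fun g x => mul_nonneg (hmpos x).le (Real.rpow_nonneg (abs_nonneg _) _)
  -- pointwise convergence of the main term
  have htendΦ : ∀ x, Tendsto (fun n => f n x) atTop (𝓝 (f₀ x)) →
      Tendsto (fun n => m x * |f n x| ^ r x) atTop (𝓝 (m x * |f₀ x| ^ r x)) := by
    intro x hx
    have h1 : Tendsto (fun n => |f n x|) atTop (𝓝 |f₀ x|) := hx.abs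
    have h2 : ContinuousAt (fun t : ℝ => t ^ r x) |f₀ x| :=
      Real.continuousAt_rpow_const _ _ (Or.inr (hrpos x).le)
    exact (h2.tendsto.comp h1).const_mul (m x)
  -- pointwise convergence of the difference term to 0
  have htendψ : ∀ x, Tendsto (fun n => f n x) atTop (𝓝 (f₀ x)) →
      Tendsto (fun n => m x * |f n x - f₀ x| ^ r x) atTop (𝓝 0) := by
    intro x hx
    have hsub : Tendsto (fun n => f n x - f₀ x) atTop (𝓝 0) := by
      simpa using hx.sub (tendsto_const_nhds (x := f₀ x))
    have habs : Tendsto (fun n => |f n x - f₀ x|) atTop (𝓝 0) := by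
      simpa using hsub.abs
    have hct : ContinuousAt (fun t : ℝ => t ^ r x) 0 :=
      Real.continuousAt_rpow_const _ _ (Or.inr (hrpos x).le)
    have h3 := hct.tendsto.comp habs
    rw [Real.zero_rpow (hrpos x).ne'] at h3
    simpa using h3.const_mul (m x)
  -- Step A : integrability of the limit term via Fatou
  have hΦ₀meas := hΦmeas f₀ hf₀
  have hfatou : ∫⁻ x, ENNReal.ofReal (m x * |f₀ x| ^ r x) ≤ ENNReal.ofReal C := by
    calc ∫⁻ x, ENNReal.ofReal (m x * |f₀ x| ^ r x)
        = ∫⁻ x, Filter.liminf (fun n => ENNReal.ofReal (m x * |f n x| ^ r x)) atTop := by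
          refine lintegral_congr_ae (hae.mono fun x hx => ?_)
          exact ((ENNReal.continuous_ofReal.tendsto _).comp (htendΦ x hx)).liminf_eq.symm
      _ ≤ Filter.liminf (fun n => ∫⁻ x, ENNReal.ofReal (m x * |f n x| ^ r x)) atTop :=
          lintegral_liminf_le fun n => (hΦmeas (f n) (hfmeas n)).ennreal_ofReal
      _ ≤ Filter.liminf (fun _ : ℕ => ENNReal.ofReal C) atTop := by
          refine Filter.liminf_le_liminf (Filter.Eventually.of_forall fun n => ?_)
          rw [← ofReal_integral_eq_lintegral_ofReal (hint n)
            (Filter.Eventually.of_forall (hΦnn (f n)))]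
          exact ENNReal.ofReal_le_ofReal (hC n)
      _ = ENNReal.ofReal C := Filter.liminf_const _
  have hΦ₀int : Integrable (fun x => m x * |f₀ x| ^ r x) :=
    ⟨hΦ₀meas.aestronglyMeasurable,
     (hasFiniteIntegral_iff_ofReal (Filter.Eventually.of_forall (hΦnn f₀))).2
       (lt_of_le_of_lt hfatou ENNReal.ofReal_lt_top)⟩
  -- Step B : integrability and uniform bound for the difference terms
  obtain ⟨C₂, hC₂0, hC₂⟩ := bl_key rM one_pos
  have hψpt : ∀ n x, m x * |f n x - f₀ x| ^ r x
      ≤ 2 * (m x * |f n x| ^ r x) + C₂ * (m x * |f₀ x| ^ r x) := by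
    intro n x
    have h := hC₂ (r x) (hr1 x) (hrM x) (f n x) (-(f₀ x))
    have e0 : f n x + -f₀ x = f n x - f₀ x := by ring
    rw [e0, abs_neg] at h
    have h' : |f n x - f₀ x| ^ r x ≤ 2 * |f n x| ^ r x + C₂ * |f₀ x| ^ r x := by
      have := abs_le.1 h
      linarith [this.2, le_abs_self (|f n x - f₀ x| ^ r x - |f n x| ^ r x)]
    calc m x * |f n x - f₀ x| ^ r x
        ≤ m x * (2 * |f n x| ^ r x + C₂ * |f₀ x| ^ r x) :=
          mul_le_mul_of_nonneg_left h' (hmpos x).le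
      _ = 2 * (m x * |f n x| ^ r x) + C₂ * (m x * |f₀ x| ^ r x) := by ring
  have hψmeas : ∀ n, Measurable (fun x => m x * |f n x - f₀ x| ^ r x) :=
    fun n => hΦmeas _ ((hfmeas n).sub hf₀)
  have hψint : ∀ n, Integrable (fun x => m x * |f n x - f₀ x| ^ r x) := by
    intro n
    refine Integrable.mono' (((hint n).const_mul 2).add (hΦ₀int.const_mul C₂))
      (hψmeas n).aestronglyMeasurable (Filter.Eventually.of_forall fun x => ?_)
    rw [Real.norm_eq_abs, abs_of_nonneg (hΦnn (fun y => f n y - f₀ y) x)]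
    exact hψpt n x
  have hψbound : ∀ n, ∫ x, m x * |f n x - f₀ x| ^ r x
      ≤ 2 * C + C₂ * ∫ x, m x * |f₀ x| ^ r x := by
    intro n
    calc ∫ x, m x * |f n x - f₀ x| ^ r x
        ≤ ∫ x, (2 * (m x * |f n x| ^ r x) + C₂ * (m x * |f₀ x| ^ r x)) :=
          integral_mono (hψint n) (((hint n).const_mul 2).add (hΦ₀int.const_mul C₂))
            fun x => hψpt n x
      _ = 2 * (∫ x, m x * |f n x| ^ r x) + C₂ * ∫ x, m x * |f₀ x| ^ r x := by
          rw [integral_add ((hint n).const_mul 2) (hΦ₀int.const_mul C₂),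
            integral_const_mul, integral_const_mul]
      _ ≤ 2 * C + C₂ * ∫ x, m x * |f₀ x| ^ r x := by linarith [hC n]
  set M : ℝ := 2 * C + C₂ * ∫ x, m x * |f₀ x| ^ r x with hMdef
  have hM0 : 0 ≤ M :=
    le_trans (integral_nonneg fun x => hΦnn (fun y => f 0 y - f₀ y) x) (hψbound 0)
  clear_value M
  -- Step C : the Brezis–Lieb limit
  refine ⟨hΦ₀int, ?_⟩
  rw [NormedAddCommGroup.tendsto_nhds_zero]
  intro δ hδ
  have hεpos : 0 < δ / (2 * (M + 1)) := by positivity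
  set ε : ℝ := δ / (2 * (M + 1)) with hεdef
  have hεM : ε * M ≤ δ / 2 := by
    rw [hεdef, div_mul_eq_mul_div, div_le_div_iff₀ (by positivity) two_pos]
    nlinarith
  clear_value ε
  obtain ⟨C₃, hC₃0, hC₃⟩ := bl_key rM hεpos
  -- pointwise ε-inequality for the Brezis–Lieb quantity
  have hkey : ∀ n x, |m x * |f n x| ^ r x - m x * |f n x - f₀ x| ^ r x - m x * |f₀ x| ^ r x|
      ≤ ε * (m x * |f n x - f₀ x| ^ r x) + (C₃ + 1) * (m x * |f₀ x| ^ r x) := by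
    intro n x
    have h := hC₃ (r x) (hr1 x) (hrM x) (f n x - f₀ x) (f₀ x)
    have e0 : f n x - f₀ x + f₀ x = f n x := by ring
    rw [e0] at h
    have hb0 : (0:ℝ) ≤ |f₀ x| ^ r x := Real.rpow_nonneg (abs_nonneg _) _
    have h2 : |(|f n x| ^ r x - |f n x - f₀ x| ^ r x - |f₀ x| ^ r x)|
        ≤ ε * |f n x - f₀ x| ^ r x + (C₃ + 1) * |f₀ x| ^ r x := by
      have htri : |(|f n x| ^ r x - |f n x - f₀ x| ^ r x - |f₀ x| ^ r x)|
          ≤ |(|f n x| ^ r x - |f n x - f₀ x| ^ r x)| + |f₀ x| ^ r x := by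
        have := abs_add_le (|f n x| ^ r x - |f n x - f₀ x| ^ r x) (-(|f₀ x| ^ r x))
        rw [abs_neg, abs_of_nonneg hb0] at this
        calc |(|f n x| ^ r x - |f n x - f₀ x| ^ r x - |f₀ x| ^ r x)|
            = |(|f n x| ^ r x - |f n x - f₀ x| ^ r x) + -(|f₀ x| ^ r x)| := by ring_nf
          _ ≤ _ := this
      linarith
    have e : m x * |f n x| ^ r x - m x * |f n x - f₀ x| ^ r x - m x * |f₀ x| ^ r x
        = m x * (|f n x| ^ r x - |f n x - f₀ x| ^ r x - |f₀ x| ^ r x) := by ring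
    rw [e, abs_mul, abs_of_nonneg (hmpos x).le]
    calc m x * |(|f n x| ^ r x - |f n x - f₀ x| ^ r x - |f₀ x| ^ r x)|
        ≤ m x * (ε * |f n x - f₀ x| ^ r x + (C₃ + 1) * |f₀ x| ^ r x) :=
          mul_le_mul_of_nonneg_left h2 (hmpos x).le
      _ = ε * (m x * |f n x - f₀ x| ^ r x) + (C₃ + 1) * (m x * |f₀ x| ^ r x) := by ring
  have hgint : ∀ n, Integrable (fun x =>
      |m x * |f n x| ^ r x - m x * |f n x - f₀ x| ^ r x - m x * |f₀ x| ^ r x|) :=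
    fun n => (((hint n).sub (hψint n)).sub hΦ₀int).abs
  -- the dominated part W n
  have hWint : ∀ n, Integrable (fun x =>
      max (|m x * |f n x| ^ r x - m x * |f n x - f₀ x| ^ r x - m x * |f₀ x| ^ r x|
        - ε * (m x * |f n x - f₀ x| ^ r x)) 0) := by
    intro n
    exact ((hgint n).sub ((hψint n).const_mul ε)).sup (integrable_zero _ _ _)
  have hWtend : Tendsto (fun n => ∫ x,
      max (|m x * |f n x| ^ r x - m x * |f n x - f₀ x| ^ r x - m x * |f₀ x| ^ r x|
        - ε * (m x * |f n x - f₀ x| ^ r x)) 0) atTop (𝓝 0) := by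
    have := tendsto_integral_of_dominated_convergence
      (F := fun n x =>
        max (|m x * |f n x| ^ r x - m x * |f n x - f₀ x| ^ r x - m x * |f₀ x| ^ r x|
          - ε * (m x * |f n x - f₀ x| ^ r x)) 0)
      (f := fun _ => (0:ℝ)) (bound := fun x => (C₃ + 1) * (m x * |f₀ x| ^ r x))
      (fun n => (hWint n).1) (hΦ₀int.const_mul (C₃ + 1))
      (fun n => Filter.Eventually.of_forall fun x => ?_) ?_
    · simpa using this
    · -- bound
      show ‖max (|m x * |f n x| ^ r x - m x * |f n x - f₀ x| ^ r x - m x * |f₀ x| ^ r x|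
        - ε * (m x * |f n x - f₀ x| ^ r x)) 0‖ ≤ (C₃ + 1) * (m x * |f₀ x| ^ r x)
      rw [Real.norm_eq_abs, abs_of_nonneg (le_max_right _ 0)]
      refine max_le ?_ (mul_nonneg (by linarith) (hΦnn f₀ x))
      linarith [hkey n x, mul_nonneg hεpos.le (hΦnn (fun y => f n y - f₀ y) x)]
    · -- a.e. limit
      refine hae.mono fun x hx => ?_
      have h1 := htendΦ x hx
      have h2 := htendψ x hx
      have h3 : Tendsto (fun n =>
          |m x * |f n x| ^ r x - m x * |f n x - f₀ x| ^ r x - m x * |f₀ x| ^ r x|)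
          atTop (𝓝 0) := by
        have h4 := (h1.sub h2).sub (tendsto_const_nhds (x := m x * |f₀ x| ^ r x))
        simp only [sub_zero, sub_self] at h4
        simpa using h4.abs
      refine squeeze_zero (fun n => le_max_right _ 0) (fun n => ?_) h3
      refine max_le ?_ (abs_nonneg _)
      have := mul_nonneg hεpos.le (hΦnn (fun y => f n y - f₀ y) x)
      linarith
  have hev : ∀ᶠ n in atTop, (∫ x,
      max (|m x * |f n x| ^ r x - m x * |f n x - f₀ x| ^ r x - m x * |f₀ x| ^ r x|
        - ε * (m x * |f n x - f₀ x| ^ r x)) 0) < δ / 2 :=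
    hWtend.eventually_lt_const (by linarith)
  refine hev.mono fun n hn => ?_
  have hψ0 : 0 ≤ ∫ x, m x * |f n x - f₀ x| ^ r x :=
    integral_nonneg fun x => hΦnn (fun y => f n y - f₀ y) x
  have h1 : (∫ x, |m x * |f n x| ^ r x - m x * |f n x - f₀ x| ^ r x - m x * |f₀ x| ^ r x|)
      ≤ (∫ x, max (|m x * |f n x| ^ r x - m x * |f n x - f₀ x| ^ r x - m x * |f₀ x| ^ r x|
          - ε * (m x * |f n x - f₀ x| ^ r x)) 0)
        + ε * ∫ x, m x * |f n x - f₀ x| ^ r x := by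
    calc (∫ x, |m x * |f n x| ^ r x - m x * |f n x - f₀ x| ^ r x - m x * |f₀ x| ^ r x|)
        ≤ ∫ x, (max (|m x * |f n x| ^ r x - m x * |f n x - f₀ x| ^ r x - m x * |f₀ x| ^ r x|
            - ε * (m x * |f n x - f₀ x| ^ r x)) 0
          + ε * (m x * |f n x - f₀ x| ^ r x)) := by
          refine integral_mono (hgint n) ((hWint n).add ((hψint n).const_mul ε)) fun x => ?_
          have := le_max_left (|m x * |f n x| ^ r x - m x * |f n x - f₀ x| ^ r x
            - m x * |f₀ x| ^ r x| - ε * (m x * |f n x - f₀ x| ^ r x)) 0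
          linarith
      _ = _ := by
          rw [integral_add (hWint n) ((hψint n).const_mul ε), integral_const_mul]
  have h2 : ε * (∫ x, m x * |f n x - f₀ x| ^ r x) ≤ δ / 2 := by
    have hle : ε * (∫ x, m x * |f n x - f₀ x| ^ r x) ≤ ε * M :=
      mul_le_mul_of_nonneg_left (hψbound n) hεpos.le
    linarith
  rw [Real.norm_eq_abs, abs_of_nonneg (integral_nonneg fun x => abs_nonneg _)]
  linarith
end

section
/- Let ν and (ν_n) be nonnegative finite Radon measures on ℝ^N with ν_n converging weakly-* to ν in the dual of C_0(ℝ^N). Then for any continuous r : ℝ^N → ℝ with 1 < r⁻ ≤ r⁺ < ∞ and any φ ∈ C_c(ℝ^N), the Luxemburg norms converge: ‖φ‖_{L^{r(·)}_{ν_n}(ℝ^N)} → ‖φ‖_{L^{r(·)}_{ν}(ℝ^N)}. -/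
open MeasureTheory Filter Topology Set

noncomputable def vModular {Ω : Type*} [MeasurableSpace Ω] (μ : Measure Ω)
    (p : Ω → ℝ) (u : Ω → ℝ) : ℝ :=
  ∫ x, |u x| ^ p x ∂μ

noncomputable def luxNorm {Ω : Type*} [MeasurableSpace Ω] (μ : Measure Ω)
    (p : Ω → ℝ) (u : Ω → ℝ) : ℝ :=
  sInf {l : ℝ | 0 < l ∧ vModular μ p (fun x => u x / l) ≤ 1}

section Aux

variable {N : ℕ} {r φ : EuclideanSpace ℝ (Fin N) → ℝ}

lemma aux_cont (hr : Continuous r) (hpos : ∀ x, 0 < r x) (hφc : Continuous φ) (l : ℝ) :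
    Continuous fun x : EuclideanSpace ℝ (Fin N) => |φ x / l| ^ r x :=
  ((hφc.div_const l).abs).rpow hr fun x => Or.inr (hpos x)

lemma aux_supp (hpos : ∀ x, 0 < r x) (hφs : HasCompactSupport φ) (l : ℝ) :
    HasCompactSupport fun x : EuclideanSpace ℝ (Fin N) => |φ x / l| ^ r x := by
  apply hφs.mono'
  intro x hx
  have hφx : φ x ≠ 0 := by
    intro h
    apply hx
    simp only [Function.mem_support, not_not] at *
    rw [h, zero_div, abs_zero, Real.zero_rpow (hpos x).ne']
  exact subset_closure hφx

lemma aux_int (hr : Continuous r) (hpos : ∀ x, 0 < r x) (hφc : Continuous φ)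
    (hφs : HasCompactSupport φ) (μ : Measure (EuclideanSpace ℝ (Fin N))) [IsFiniteMeasure μ]
    (l : ℝ) : Integrable (fun x => |φ x / l| ^ r x) μ :=
  (aux_cont hr hpos hφc l).integrable_of_hasCompactSupport (aux_supp hpos hφs l)

lemma vModular_nonneg (μ : Measure (EuclideanSpace ℝ (Fin N))) (l : ℝ) :
    0 ≤ vModular μ r (fun x => φ x / l) :=
  integral_nonneg fun x => Real.rpow_nonneg (abs_nonneg _) _

lemma rho_compare (μ : Measure (EuclideanSpace ℝ (Fin N))) [IsFiniteMeasure μ]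
    (hr : Continuous r) {rm : ℝ} (hrm : 0 < rm) (hrb : ∀ x, rm ≤ r x)
    (hφc : Continuous φ) (hφs : HasCompactSupport φ)
    {l' l : ℝ} (hl' : 0 < l') (hll : l' ≤ l) :
    vModular μ r (fun x => φ x / l) ≤ (l' / l) ^ rm * vModular μ r (fun x => φ x / l') := by
  have hpos : ∀ x, 0 < r x := fun x => hrm.trans_le (hrb x)
  have hl : 0 < l := hl'.trans_le hll
  have ht0 : 0 < l' / l := div_pos hl' hl
  have ht1 : l' / l ≤ 1 := (div_le_one hl).2 hll
  unfold vModular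
  rw [← integral_const_mul]
  refine integral_mono (aux_int hr hpos hφc hφs μ l)
    (((aux_int hr hpos hφc hφs μ l').const_mul _)) fun x => ?_
  have habs : |φ x / l| = |φ x / l'| * (l' / l) := by
    rw [abs_div, abs_div, abs_of_pos hl, abs_of_pos hl']
    field_simp
  rw [habs, Real.mul_rpow (abs_nonneg _) ht0.le]
  calc |φ x / l'| ^ r x * (l' / l) ^ r x
      ≤ |φ x / l'| ^ r x * (l' / l) ^ rm := by
        apply mul_le_mul_of_nonneg_left _ (Real.rpow_nonneg (abs_nonneg _) _)
        exact Real.rpow_le_rpow_of_exponent_ge ht0 ht1 (hrb x)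
    _ = (l' / l) ^ rm * |φ x / l'| ^ r x := mul_comm _ _

lemma lux_set_nonempty (μ : Measure (EuclideanSpace ℝ (Fin N))) [IsFiniteMeasure μ]
    {rm : ℝ} (hrm : 1 ≤ rm) (hrb : ∀ x, rm ≤ r x)
    (hφc : Continuous φ) (hφs : HasCompactSupport φ) :
    ∃ l : ℝ, 0 < l ∧ vModular μ r (fun x => φ x / l) ≤ 1 := by
  obtain ⟨M, hM⟩ := hφs.exists_bound_of_continuous hφc
  set m : ℝ := (μ Set.univ).toReal with hm
  have hm0 : 0 ≤ m := ENNReal.toReal_nonneg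
  set B : ℝ := |M| + 1 with hB
  have hB0 : 0 < B := by positivity
  set L : ℝ := max B (B * (m + 1)) with hLdef
  have hBL : B ≤ L := le_max_left _ _
  have hL0 : 0 < L := hB0.trans_le hBL
  refine ⟨L, hL0, ?_⟩
  set s : ℝ := B / L with hs
  have hs0 : 0 < s := div_pos hB0 hL0
  have hs1 : s ≤ 1 := (div_le_one hL0).2 hBL
  have hpt : ∀ x, |φ x / L| ^ r x ≤ s ^ rm := by
    intro x
    have h1 : |φ x / L| ≤ s := by
      rw [abs_div, abs_of_pos hL0, hs]
      gcongr
      calc |φ x| = ‖φ x‖ := rfl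
          _ ≤ M := hM x
          _ ≤ |M| := le_abs_self M
          _ ≤ B := by simp [hB]
    calc |φ x / L| ^ r x ≤ s ^ r x :=
          Real.rpow_le_rpow (abs_nonneg _) h1 (zero_le_one.trans (hrm.trans (hrb x)))
      _ ≤ s ^ rm := Real.rpow_le_rpow_of_exponent_ge hs0 hs1 (hrb x)
  have hpos : ∀ x, 0 < r x := fun x => (zero_lt_one.trans_le hrm).trans_le (hrb x)
  have hint : vModular μ r (fun x => φ x / L) ≤ s ^ rm * m := by
    have h := norm_integral_le_of_norm_le_const (μ := μ)
      (f := fun x => |φ x / L| ^ r x) (C := s ^ rm) ?_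
    · calc vModular μ r (fun x => φ x / L)
          ≤ ‖∫ x, |φ x / L| ^ r x ∂μ‖ := le_abs_self _
        _ ≤ s ^ rm * m := h
    · filter_upwards with x
      rw [Real.norm_eq_abs, abs_of_nonneg (Real.rpow_nonneg (abs_nonneg _) _)]
      exact hpt x
  refine hint.trans ?_
  have hsm : s ^ rm ≤ s := by
    calc s ^ rm ≤ s ^ (1 : ℝ) := Real.rpow_le_rpow_of_exponent_ge hs0 hs1 hrm
      _ = s := Real.rpow_one s
  calc s ^ rm * m ≤ s * m := mul_le_mul_of_nonneg_right hsm hm0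
    _ = B * m / L := by rw [hs]; ring
    _ ≤ 1 := by
        rw [div_le_one hL0]
        calc B * m ≤ B * (m + 1) := by nlinarith
          _ ≤ L := le_max_right _ _

end Aux

/-- convergence of Luxemburg norms under weak-* convergence of measures. -/
theorem stmt5 {N : ℕ} (ν : ℕ → Measure (EuclideanSpace ℝ (Fin N)))
    (ν₀ : Measure (EuclideanSpace ℝ (Fin N)))
    (hfin : ∀ n, IsFiniteMeasure (ν n)) (hfin₀ : IsFiniteMeasure ν₀)
    (hweak : ∀ f : ZeroAtInftyContinuousMap (EuclideanSpace ℝ (Fin N)) ℝ,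
      Tendsto (fun n => ∫ x, f x ∂(ν n)) atTop (𝓝 (∫ x, f x ∂ν₀)))
    (r : EuclideanSpace ℝ (Fin N) → ℝ) (hr : Continuous r)
    (rm rM : ℝ) (hrm : 1 < rm) (hbounds : ∀ x, rm ≤ r x ∧ r x ≤ rM)
    (φ : EuclideanSpace ℝ (Fin N) → ℝ) (hφc : Continuous φ) (hφs : HasCompactSupport φ) :
    Tendsto (fun n => luxNorm (ν n) r φ) atTop (𝓝 (luxNorm ν₀ r φ)) := by
  haveI := hfin₀
  have hrb : ∀ x, rm ≤ r x := fun x => (hbounds x).1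
  have hrm0 : 0 < rm := zero_lt_one.trans hrm
  have hpos : ∀ x, 0 < r x := fun x => hrm0.trans_le (hrb x)
  set S : Measure (EuclideanSpace ℝ (Fin N)) → Set ℝ :=
    fun μ => {l : ℝ | 0 < l ∧ vModular μ r (fun x => φ x / l) ≤ 1} with hS
  have hlux : ∀ μ : Measure (EuclideanSpace ℝ (Fin N)), luxNorm μ r φ = sInf (S μ) :=
    fun μ => rfl
  have hbdd : ∀ μ, BddBelow (S μ) := fun μ => ⟨0, fun l hl => hl.1.le⟩
  have hne : ∀ μ : Measure (EuclideanSpace ℝ (Fin N)), IsFiniteMeasure μ → (S μ).Nonempty := by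
    intro μ hμ
    obtain ⟨l, hl0, hl1⟩ := lux_set_nonempty μ hrm.le hrb hφc hφs
    exact ⟨l, hl0, hl1⟩
  have hnonneg : ∀ μ : Measure (EuclideanSpace ℝ (Fin N)), 0 ≤ luxNorm μ r φ := by
    intro μ
    exact Real.sInf_nonneg fun l hl => hl.1.le
  have hmod : ∀ l : ℝ, 0 < l → Tendsto (fun n => vModular (ν n) r (fun x => φ x / l)) atTop
      (𝓝 (vModular ν₀ r (fun x => φ x / l))) := by
    intro l hl
    let g : ZeroAtInftyContinuousMap (EuclideanSpace ℝ (Fin N)) ℝ :=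
      { toFun := fun x => |φ x / l| ^ r x
        continuous_toFun := aux_cont hr hpos hφc l
        zero_at_infty' := (aux_supp hpos hφs l).is_zero_at_infty }
    exact hweak g
  set L : ℝ := luxNorm ν₀ r φ with hLdef
  have hL0 : 0 ≤ L := hnonneg ν₀
  rw [tendsto_order]
  constructor
  · intro a ha
    rcases lt_or_ge a 0 with ha0 | ha0
    · filter_upwards with n
      exact ha0.trans_le (hnonneg (ν n))
    · set l : ℝ := (a + L) / 2 with hldef
      have hal : a < l := by rw [hldef]; linarith
      have hlL : l < L := by rw [hldef]; linarith
      have hl0 : 0 < l := ha0.trans_lt hal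
      have hρ : 1 < vModular ν₀ r (fun x => φ x / l) := by
        by_contra h
        push_neg at h
        have hmem : l ∈ S ν₀ := ⟨hl0, h⟩
        have := csInf_le (hbdd ν₀) hmem
        rw [hlux] at hLdef
        exact absurd (hLdef ▸ this : L ≤ l) (not_le.2 hlL)
      filter_upwards [(hmod l hl0).eventually_const_lt hρ] with n hn
      haveI := hfin n
      have hle : l ≤ sInf (S (ν n)) := by
        apply le_csInf (hne (ν n) (hfin n))
        intro l'' hl''
        by_contra h
        push_neg at h
        have hcomp := rho_compare (ν n) hr hrm0 hrb hφc hφs hl''.1 h.le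
        have hfrac : (l'' / l) ^ rm ≤ 1 :=
          Real.rpow_le_one (div_nonneg hl''.1.le hl0.le) ((div_le_one hl0).2 h.le) hrm0.le
        have h1 : vModular (ν n) r (fun x => φ x / l) ≤ 1 :=
          hcomp.trans (mul_le_one₀ hfrac (vModular_nonneg _ _) hl''.2)
        exact absurd h1 (not_le.2 hn)
      calc a < l := hal
        _ ≤ luxNorm (ν n) r φ := by rw [hlux]; exact hle
  · intro b hb
    set l : ℝ := (L + b) / 2 with hldef
    have hLl : L < l := by rw [hldef]; linarith
    have hlb : l < b := by rw [hldef]; linarith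
    have hl0 : 0 < l := hL0.trans_lt hLl
    have hρ : vModular ν₀ r (fun x => φ x / l) < 1 := by
      obtain ⟨l', hl'S, hl'lt⟩ := exists_lt_of_csInf_lt (hne ν₀ hfin₀) (show sInf (S ν₀) < l from hLl)
      have hcomp := rho_compare ν₀ hr hrm0 hrb hφc hφs hl'S.1 hl'lt.le
      calc vModular ν₀ r (fun x => φ x / l)
          ≤ (l' / l) ^ rm * vModular ν₀ r (fun x => φ x / l') := hcomp
        _ ≤ (l' / l) ^ rm * 1 := mul_le_mul_of_nonneg_left hl'S.2
            (Real.rpow_nonneg (div_nonneg hl'S.1.le hl0.le) _)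
        _ = (l' / l) ^ rm := mul_one _
        _ < 1 := Real.rpow_lt_one (div_nonneg hl'S.1.le hl0.le)
            ((div_lt_one hl0).2 hl'lt) hrm0
    filter_upwards [(hmod l hl0).eventually_lt_const hρ] with n hn
    calc luxNorm (ν n) r φ ≤ l := csInf_le (hbdd (ν n)) ⟨hl0, hn.le⟩
      _ < b := hlb
end

section
/- Growth estimate for the potential A: assume A : ℝ^N × ℝ^N → ℝ is C¹ in the second variable with a = ∇_ξ A, A(x,0) = 0, and that there exist positive constants N₁, N₂ and continuous exponents 1 < p(·) < q(·) such that a(x,ξ)·ξ ≥ N₁|ξ|^{p(x)} for |ξ| ≥ 1, a(x,ξ)·ξ ≥ N₁|ξ|^{q(x)} for |ξ| ≤ 1, |a(x,ξ)| ≤ N₂|ξ|^{p(x)−1} for |ξ| ≥ 1, |a(x,ξ)| ≤ N₂|ξ|^{q(x)−1} for |ξ| ≤ 1, and a(x,ξ)·ξ ≤ s(x)A(x,ξ) with q(·) ≤ s(·). Then there exist positive constants M₁, M₂ such that M₁|ξ|^{p(x)} ≤ A(x,ξ) ≤ a(x,ξ)·ξ ≤ M₂|ξ|^{p(x)} for |ξ|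 > 1 and M₁|ξ|^{q(x)} ≤ A(x,ξ) ≤ a(x,ξ)·ξ ≤ M₂|ξ|^{q(x)} for |ξ| ≤ 1. -/
/-!
Convexity of `A(x, ·)` together with `A(x, 0) = 0` gives `A(x, ξ) ≤ a(x, ξ)·ξ` (the supporting
hyperplane at `ξ` lies below `A(x, ·)` at `0`). The growth bound `|a(x, ξ)| ≤ N₂|ξ|^{r-1}`
turns into `a(x, ξ)·ξ ≤ N₂|ξ|^r` by Cauchy–Schwarz, and the coercivity `N₁|ξ|^r ≤ a(x, ξ)·ξ`
combined with `a(x, ξ)·ξ ≤ s(x) A(x, ξ)` and the uniform bound `s ≤ sM` gives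
`(N₁ / sM)|ξ|^r ≤ A(x, ξ)`; here `r = p(x)` for `|ξ| > 1` and `r = q(x)` for `|ξ| ≤ 1`.
-/

open RealInnerProductSpace

variable {E : Type*} [NormedAddCommGroup E] [InnerProductSpace ℝ E]

theorem ConvexOn.sub_le_inner_of_hasGradientAt [CompleteSpace E] {f : E → ℝ} {g x y : E}
    (hf : ConvexOn ℝ Set.univ f) (hg : HasGradientAt f g y) : f y - f x ≤ ⟪g, y - x⟫ := by
  let φ : ℝ → ℝ := f ∘ AffineMap.lineMap x y
  have hφ : ConvexOn ℝ Set.univ φ := by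
    simpa using hf.comp_affineMap (AffineMap.lineMap x y)
  have hline : HasDerivAt (AffineMap.lineMap x y : ℝ → E) (y - x) 1 := by
    simpa using AffineMap.hasDerivAt_lineMap (a := x) (b := y) (x := (1 : ℝ))
  have hφ' : HasDerivAt φ ⟪g, y - x⟫ 1 := by
    have hg' : HasFDerivAt f (InnerProductSpace.toDual ℝ E g) (AffineMap.lineMap x y (1 : ℝ)) := by
      simpa using hg.hasFDerivAt
    simpa using hg'.comp_hasDerivAt (1 : ℝ) hline
  have hslope := hφ.slope_le_of_hasDerivAt (Set.mem_univ 0) (Set.mem_univ 1) one_pos hφ'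
  simpa [φ, slope_def_field] using hslope

theorem real_inner_le_mul_rpow_of_norm_le_mul_rpow_sub_one {g ξ : E} {r C : ℝ} (hr : 0 < r)
    (hg : ‖g‖ ≤ C * ‖ξ‖ ^ (r - 1)) : ⟪g, ξ⟫ ≤ C * ‖ξ‖ ^ r := by
  rcases eq_or_ne ξ 0 with rfl | hξ
  · simp [Real.zero_rpow hr.ne']
  have hξ' : ‖ξ‖ ≠ 0 := norm_ne_zero_iff.mpr hξ
  calc ⟪g, ξ⟫ ≤ ‖g‖ * ‖ξ‖ := real_inner_le_norm g ξ
    _ ≤ C * ‖ξ‖ ^ (r - 1) * ‖ξ‖ := mul_le_mul_of_nonneg_right hg (norm_nonneg ξ)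
    _ = C * ‖ξ‖ ^ r := by rw [Real.rpow_sub_one hξ', mul_assoc, div_mul_cancel₀ _ hξ']

theorem potential_growth_bounds [CompleteSpace E] {f : E → ℝ} {g ξ : E} {r s S c C : ℝ}
    (hf0 : f 0 = 0) (hf : ConvexOn ℝ Set.univ f) (hg : HasGradientAt f g ξ)
    (hr : 0 < r) (hs : 0 < s) (hsS : s ≤ S) (hc : 0 ≤ c)
    (hlow : c * ‖ξ‖ ^ r ≤ ⟪g, ξ⟫) (hup : ‖g‖ ≤ C * ‖ξ‖ ^ (r - 1)) (hgs : ⟪g, ξ⟫ ≤ s * f ξ) :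
    c / S * ‖ξ‖ ^ r ≤ f ξ ∧ f ξ ≤ ⟪g, ξ⟫ ∧ ⟪g, ξ⟫ ≤ C * ‖ξ‖ ^ r := by
  have hcξ : 0 ≤ c * ‖ξ‖ ^ r := mul_nonneg hc (Real.rpow_nonneg (norm_nonneg ξ) r)
  have hf_nonneg : 0 ≤ f ξ := nonneg_of_mul_nonneg_right (hcξ.trans (hlow.trans hgs)) hs
  refine ⟨?_, by simpa [hf0] using hf.sub_le_inner_of_hasGradientAt (x := 0) hg,
    real_inner_le_mul_rpow_of_norm_le_mul_rpow_sub_one hr hup⟩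
  rw [div_mul_eq_mul_div, div_le_iff₀ (hs.trans_le hsS), mul_comm (f ξ)]
  calc c * ‖ξ‖ ^ r ≤ s * f ξ := hlow.trans hgs
    _ ≤ S * f ξ := mul_le_mul_of_nonneg_right hsS hf_nonneg

/-- growth estimate for the potential `A`. -/
theorem stmt7 {N : ℕ}
    (A : EuclideanSpace ℝ (Fin N) → EuclideanSpace ℝ (Fin N) → ℝ)
    (a : EuclideanSpace ℝ (Fin N) → EuclideanSpace ℝ (Fin N) → EuclideanSpace ℝ (Fin N))
    (hA0 : ∀ x, A x 0 = 0)
    (hconv : ∀ x, ConvexOn ℝ Set.univ (A x))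
    (hgrad : ∀ x ξ, HasGradientAt (A x) (a x ξ) ξ)
    (p q s : EuclideanSpace ℝ (Fin N) → ℝ)
    (hp1 : ∀ x, 1 < p x) (hpq : ∀ x, p x < q x) (hqs : ∀ x, q x ≤ s x)
    (sM : ℝ) (hsM : ∀ x, s x ≤ sM)
    (N₁ N₂ : ℝ) (hN₁ : 0 < N₁) (hN₂ : 0 < N₂)
    (hlow1 : ∀ x ξ, 1 ≤ ‖ξ‖ → N₁ * ‖ξ‖ ^ p x ≤ ⟪a x ξ, ξ⟫)
    (hlow2 : ∀ x ξ, ‖ξ‖ ≤ 1 → N₁ * ‖ξ‖ ^ q x ≤ ⟪a x ξ, ξ⟫)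
    (hup1 : ∀ x ξ, 1 ≤ ‖ξ‖ → ‖a x ξ‖ ≤ N₂ * ‖ξ‖ ^ (p x - 1))
    (hup2 : ∀ x ξ, ‖ξ‖ ≤ 1 → ‖a x ξ‖ ≤ N₂ * ‖ξ‖ ^ (q x - 1))
    (hs : ∀ x ξ, ⟪a x ξ, ξ⟫ ≤ s x * A x ξ) :
    ∃ M₁ > (0 : ℝ), ∃ M₂ > (0 : ℝ), ∀ x ξ,
      (1 < ‖ξ‖ →
        M₁ * ‖ξ‖ ^ p x ≤ A x ξ ∧ A x ξ ≤ ⟪a x ξ, ξ⟫ ∧ ⟪a x ξ, ξ⟫ ≤ M₂ * ‖ξ‖ ^ p x) ∧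
      (‖ξ‖ ≤ 1 →
        M₁ * ‖ξ‖ ^ q x ≤ A x ξ ∧ A x ξ ≤ ⟪a x ξ, ξ⟫ ∧ ⟪a x ξ, ξ⟫ ≤ M₂ * ‖ξ‖ ^ q x) := by
  have hp : ∀ x, 0 < p x := fun x => by linarith [hp1 x]
  have hq : ∀ x, 0 < q x := fun x => (hp x).trans (hpq x)
  have hs_pos : ∀ x, 0 < s x := fun x => (hq x).trans_le (hqs x)
  have hsM_pos : 0 < sM := (hs_pos 0).trans_le (hsM 0)
  refine ⟨N₁ / sM, div_pos hN₁ hsM_pos, N₂, hN₂, fun x ξ => ⟨fun hξ => ?_, fun hξ => ?_⟩⟩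
  · exact potential_growth_bounds (hA0 x) (hconv x) (hgrad x ξ) (hp x) (hs_pos x) (hsM x)
      hN₁.le (hlow1 x ξ hξ.le) (hup1 x ξ hξ.le) (hs x ξ)
  · exact potential_growth_bounds (hA0 x) (hconv x) (hgrad x ξ) (hq x) (hs_pos x) (hsM x)
      hN₁.le (hlow2 x ξ hξ) (hup2 x ξ hξ) (hs x ξ)
end

section
/- Lower bound via concentration: suppose c ∈ ℝ, a₁, λ, C₃, β, K₁ > 0, and nonnegative reals I_b := ∫_{ℝ^N} b|u|^{t(x)} dx and I_ρ := ∫_{ℝ^N} ρ|u|^{r(x)} dx satisfy c ≥ a₁ I_b − (λC₃/β) I_ρ + K₁, together with the weighted Hölder bound I_ρ ≤ 2 ‖ρ b^{-1}‖_{L^{l'(·)}(b)} ‖|u|^{r(·)}‖_{L^{l(·)}(b)} where l(·) = t(·)/r(·) with 1 < l⁻ ≤ l⁺ < ∞, and the modular–norm bound I_b ≥ min{‖|u|^{r(·)}‖_{L^{l(·)}(b)}^{l⁻}, ‖|u|^{r(·)}‖_{L^{l(·)}(b)}^{l⁺}}. Then c ≥ K₁ − K₂ max{λ^{l⁺/(l⁺−1)},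 λ^{l⁻/(l⁻−1)}}, where K₂ = max_{*∈{+,−}} [(l^*)^{−1/(l^*−1)} − (l^*)^{−l^*/(l^*−1)}] a₁^{−1/(l^*−1)} b₁^{l^*/(l^*−1)} with b₁ = (2C₃/β)‖ρ b^{-1}‖_{L^{l'(·)}(b)}. -/
/-!
Write `ξ = ‖|u|^{r(·)}‖` and `b₁ = (2C₃/β)‖ρ b⁻¹‖`. The Hölder bound turns the hypothesis into
`c ≥ K₁ + a₁ I_b - λ b₁ ξ`, and by the modular bound `I_b ≥ ξ^{l⁻}` when `ξ ≥ 1`, `I_b ≥ ξ^{l⁺}`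
when `ξ ≤ 1`. In either case `a₁ ξ^l - λ b₁ ξ` is bounded below by its minimum over `ξ ≥ 0`,
which Young's inequality with exponents `l` and `l/(l-1)` computes.
-/

open Real

/-- `max_{ξ ≥ 0} (d ξ - a ξ^l)`, attained at `ξ = (d / (l a))^{1/(l-1)}`. -/
noncomputable def youngConst (l a d : ℝ) : ℝ :=
  (l ^ (-1 / (l - 1)) - l ^ (-l / (l - 1))) * a ^ (-1 / (l - 1)) * d ^ (l / (l - 1))

lemma mul_sub_youngConst_le {l a d ξ : ℝ} (hl : 1 < l) (ha : 0 < a) (hd : 0 ≤ d) (hξ : 0 ≤ ξ) :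
    d * ξ - youngConst l a d ≤ a * ξ ^ l := by
  have hl0 : 0 < l := one_pos.trans hl
  have hl1 : 0 < l - 1 := by linarith
  have hla : 0 < l * a := by positivity
  set q := l / (l - 1) with hq
  set E : ℝ := (l * a) ^ l⁻¹ with hE
  have hE0 : 0 < E := rpow_pos_of_pos hla _
  -- Young's inequality for the splitting `d ξ = (E ξ) (d / E)` with `E^l = l a`
  have hlq : l.HolderConjugate q := HolderConjugate.conjExponent hl
  have young := young_inequality_of_nonneg (a := E * ξ) (b := d * E⁻¹)
    (by positivity) (by positivity) hlq
  have hprod : (E * ξ) * (d * E⁻¹) = d * ξ := by field_simp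
  have hEl : E ^ l = l * a := by
    rw [hE, ← rpow_mul hla.le, inv_mul_cancel₀ hl0.ne', rpow_one]
  have hEq : E⁻¹ ^ q = (l * a) ^ (-1 / (l - 1)) := by
    rw [hE, ← rpow_neg hla.le, ← rpow_mul hla.le, hq]
    congr 1
    field_simp
  have hfirst : (E * ξ) ^ l / l = a * ξ ^ l := by
    rw [mul_rpow hE0.le hξ, hEl]
    field_simp
  have hpow : l ^ (-l / (l - 1)) = l ^ (-1 / (l - 1)) / l := by
    rw [show -l / (l - 1) = -1 / (l - 1) - 1 by field_simp; ring, rpow_sub hl0, rpow_one]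
  have hsecond : (d * E⁻¹) ^ q / q = youngConst l a d := by
    rw [youngConst, mul_rpow hd (inv_nonneg.mpr hE0.le), hEq, mul_rpow hl0.le ha.le, hpow, hq]
    field_simp
  rw [hprod, hfirst, hsecond] at young
  linarith

lemma youngConst_nonneg {l a d : ℝ} (hl : 1 < l) (ha : 0 < a) (hd : 0 ≤ d) :
    0 ≤ youngConst l a d := by
  have hl1 : 0 < l - 1 := by linarith
  have hexp : -l / (l - 1) ≤ -1 / (l - 1) := by
    rw [div_le_div_iff_of_pos_right hl1]
    linarith
  have hcoef : l ^ (-l / (l - 1)) ≤ l ^ (-1 / (l - 1)) :=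
    rpow_le_rpow_of_exponent_le hl.le hexp
  unfold youngConst
  have := rpow_nonneg ha.le (-1 / (l - 1))
  have := rpow_nonneg hd (l / (l - 1))
  have : 0 ≤ l ^ (-1 / (l - 1)) - l ^ (-l / (l - 1)) := by linarith
  positivity

lemma youngConst_mul {l a s d : ℝ} (hs : 0 ≤ s) (hd : 0 ≤ d) :
    youngConst l a (s * d) = youngConst l a d * s ^ (l / (l - 1)) := by
  rw [youngConst, youngConst, mul_rpow hs hd]
  ring

lemma min_rpow_rpow_of_one_le {x p q : ℝ} (hx : 1 ≤ x) (hpq : p ≤ q) :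
    min (x ^ p) (x ^ q) = x ^ p :=
  min_eq_left (rpow_le_rpow_of_exponent_le hx hpq)

lemma min_rpow_rpow_of_le_one {x p q : ℝ} (hx₀ : 0 ≤ x) (hx₁ : x ≤ 1) (hp : 0 ≤ p)
    (hpq : p ≤ q) : min (x ^ p) (x ^ q) = x ^ q :=
  min_eq_right (rpow_le_rpow_of_exponent_ge' hx₀ hx₁ hp hpq)

lemma mul_sub_max_youngConst_le {a d ξ I p q : ℝ} (ha : 0 < a) (hd : 0 ≤ d) (hξ : 0 ≤ ξ)
    (hp : 1 < p) (hpq : p ≤ q) (hI : min (ξ ^ p) (ξ ^ q) ≤ I) :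
    d * ξ - max (youngConst q a d) (youngConst p a d) ≤ a * I := by
  rcases le_total 1 ξ with hξ1 | hξ1
  · rw [min_rpow_rpow_of_one_le hξ1 hpq] at hI
    have := mul_sub_youngConst_le hp ha hd hξ
    have := mul_le_mul_of_nonneg_left hI ha.le
    have := le_max_right (youngConst q a d) (youngConst p a d)
    linarith
  · rw [min_rpow_rpow_of_le_one hξ hξ1 (by linarith) hpq] at hI
    have := mul_sub_youngConst_le (hp.trans_le hpq) ha hd hξ
    have := mul_le_mul_of_nonneg_left hI ha.le
    have := le_max_left (youngConst q a d) (youngConst p a d)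
    linarith

lemma max_mul_mul_le_max_mul_max_of_nonneg {a b c d : ℝ} (ha : 0 ≤ a) (hb : 0 ≤ b)
    (hd : 0 ≤ d) :
    max (a * b) (c * d) ≤ max a c * max b d :=
  have hac : 0 ≤ max a c := ha.trans (le_max_left a c)
  max_le (mul_le_mul (le_max_left a c) (le_max_left b d) hb hac)
    (mul_le_mul (le_max_right a c) (le_max_right b d) hd hac)

theorem stmt15_general (c a₁ lam C₃ β K₁ : ℝ) (ha₁ : 0 < a₁) (hlam : 0 < lam)
    (hC₃ : 0 < C₃) (hβ : 0 < β)
    (Ib Iρ ξ w : ℝ) (hξ : 0 ≤ ξ) (hw : 0 ≤ w)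
    (lm lM : ℝ) (hlm : 1 < lm) (hlmM : lm ≤ lM)
    (hmain : a₁ * Ib - lam * C₃ / β * Iρ + K₁ ≤ c)
    (hhold : Iρ ≤ 2 * w * ξ)
    (hmod : min (ξ ^ lm) (ξ ^ lM) ≤ Ib) :
    K₁ -
        max ((lM ^ (-1 / (lM - 1)) - lM ^ (-lM / (lM - 1))) * a₁ ^ (-1 / (lM - 1)) *
              (2 * C₃ / β * w) ^ (lM / (lM - 1)))
          ((lm ^ (-1 / (lm - 1)) - lm ^ (-lm / (lm - 1))) * a₁ ^ (-1 / (lm - 1)) *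
              (2 * C₃ / β * w) ^ (lm / (lm - 1))) *
          max (lam ^ (lM / (lM - 1))) (lam ^ (lm / (lm - 1))) ≤ c := by
  set b₁ := 2 * C₃ / β * w
  change K₁ - max (youngConst lM a₁ b₁) (youngConst lm a₁ b₁) * _ ≤ c
  have hb₁ : 0 ≤ b₁ := by positivity
  have hholder : lam * C₃ / β * Iρ ≤ lam * b₁ * ξ := by
    calc lam * C₃ / β * Iρ ≤ lam * C₃ / β * (2 * w * ξ) := by gcongr
      _ = lam * b₁ * ξ := by ring
  have hmin := mul_sub_max_youngConst_le ha₁ (mul_nonneg hlam.le hb₁) hξ hlm hlmM hmod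
  rw [youngConst_mul hlam.le hb₁, youngConst_mul hlam.le hb₁] at hmin
  have hmax := max_mul_mul_le_max_mul_max_of_nonneg (c := youngConst lm a₁ b₁)
    (youngConst_nonneg (hlm.trans_le hlmM) ha₁ hb₁)
    (rpow_nonneg hlam.le (lM / (lM - 1))) (rpow_nonneg hlam.le (lm / (lm - 1)))
  linarith

/-- lower bound for the critical level via concentration. -/
theorem stmt15 (c a₁ lam C₃ β K₁ : ℝ) (ha₁ : 0 < a₁) (hlam : 0 < lam)
    (hC₃ : 0 < C₃) (hβ : 0 < β) (hK₁ : 0 < K₁)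
    (Ib Iρ ξ w : ℝ) (hIb : 0 ≤ Ib) (hIρ : 0 ≤ Iρ) (hξ : 0 ≤ ξ) (hw : 0 ≤ w)
    (lm lM : ℝ) (hlm : 1 < lm) (hlmM : lm ≤ lM)
    (hmain : a₁ * Ib - lam * C₃ / β * Iρ + K₁ ≤ c)
    (hhold : Iρ ≤ 2 * w * ξ)
    (hmod : min (ξ ^ lm) (ξ ^ lM) ≤ Ib) :
    K₁ -
        max ((lM ^ (-1 / (lM - 1)) - lM ^ (-lM / (lM - 1))) * a₁ ^ (-1 / (lM - 1)) *
              (2 * C₃ / β * w) ^ (lM / (lM - 1)))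
          ((lm ^ (-1 / (lm - 1)) - lm ^ (-lm / (lm - 1))) * a₁ ^ (-1 / (lm - 1)) *
              (2 * C₃ / β * w) ^ (lm / (lm - 1))) *
          max (lam ^ (lM / (lM - 1))) (lam ^ (lm / (lm - 1))) ≤ c :=
  stmt15_general c a₁ lam C₃ β K₁ ha₁ hlam hC₃ hβ Ib Iρ ξ w hξ hw lm lM hlm hlmM hmain hhold hmod
end
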